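/- arXiv:2405.20976 — 2 statements merged into one kernel-verified Lean document; each statement's English description precedes it below -/
import Mathlib

section
/- Let k and n be positive integers with k dividing n, and let G be the complete k-partite graph whose k parts each have n/k vertices. Then every set S of 5n/k vertices of G contains at least (n/k)² pairwise edge-disjoint triangles of G. -/
open scoped Classical

/-- A voter: a strict partial order on the set `C` of candidates. -/
structure Voter (C : Type) where
  rel : C → C → Prop
  irrefl : ∀ i, ¬ rel i i
  trans : ∀ {i j k}, rel i j → rel j k → rel i k

namespace Voter

variable {C : Type}

/-- The voter strongly prefers `i` over `j`. -/
def strong (v : Voter C) (i j : C) : Prop := v.rel i j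

/-- The voter weakly prefers `i` over `j`: strongly prefers, or is indifferent. -/
def weak (v : Voter C) (i j : C) : Prop := v.rel i j ∨ (¬ v.rel i j ∧ ¬ v.rel j i)

/-- A finite antichain of the voter's partial order. -/
def IsAntichainOf (v : Voter C) (A : Finset C) : Prop :=
  ∀ i ∈ A, ∀ j ∈ A, i ≠ j → ¬ v.rel i j ∧ ¬ v.rel j i

/-- A voter is `α`-rational if every antichain of its partial order has size at most `α`. -/
def Rational (v : Voter C) (α : ℕ) : Prop :=
  ∀ A : Finset C, v.IsAntichainOf A → A.card ≤ α

end Voter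

/-- Number of voters in the list `V` satisfying the predicate `P`. -/
noncomputable def countVoters {C : Type} (V : List (Voter C)) (P : Voter C → Prop) : ℕ :=
  (V.map fun v => if P v then 1 else 0).sum

/-- A (finite, nonempty) list of voters is consistent with the matrix `M` if the
rationality constraints hold for every ordered pair of distinct candidates. -/
def Consistent {C : Type} (M : C → C → ℝ) (V : List (Voter C)) : Prop :=
  V ≠ [] ∧ ∀ i j : C, i ≠ j →
    (countVoters V (fun v => v.strong i j) : ℝ) / (V.length : ℝ) ≤ M i j ∧
      M i j ≤ (countVoters V (fun v => v.weak i j) : ℝ) / (V.length : ℝ)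

/-- `M` is a preference matrix. -/
def IsPrefMatrix {C : Type} (M : C → C → ℝ) : Prop :=
  (∀ i, M i i = 0) ∧ (∀ i j, 0 ≤ M i j) ∧ (∀ i j : C, i ≠ j → M i j + M j i = 1)

/-- `M` is half-integral. -/
def HalfIntegral {C : Type} (M : C → C → ℝ) : Prop :=
  ∀ i j, M i j = 0 ∨ M i j = 1 / 2 ∨ M i j = 1

/-- `M` is integral. -/
def Integral {C : Type} (M : C → C → ℝ) : Prop :=
  ∀ i j, M i j = 0 ∨ M i j = 1

/-- `M` is `α`-rationalizable: some finite nonempty list of `α`-rational voters is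
consistent with `M`. -/
def Rationalizable {C : Type} (M : C → C → ℝ) (α : ℕ) : Prop :=
  ∃ V : List (Voter C), Consistent M V ∧ ∀ v ∈ V, v.Rational α

/-- The rationality number of `M`: the least `α` such that `M` is `α`-rationalizable. -/
noncomputable def rationalityNumber {C : Type} (M : C → C → ℝ) : ℕ :=
  sInf {α | Rationalizable M α}

/-- The unanimity graph of `M`: an edge between `i` and `j` iff `p i j = 1` or `p j i = 1`. -/
def unanimityGraph {C : Type} (M : C → C → ℝ) : SimpleGraph C where
  Adj i j := i ≠ j ∧ (M i j = 1 ∨ M j i = 1)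
  symm := by
    constructor
    intro i j h
    exact ⟨h.1.symm, h.2.symm⟩
  loopless := by
    constructor
    intro i h
    exact h.1 rfl

/-- The voting graph of `M`, as a relation: an arc from `i` to `j` iff `p i j = 1`. -/
def votingRel {C : Type} (M : C → C → ℝ) : C → C → Prop := fun i j => M i j = 1

/-- The relation `r` is acyclic on the set `S`: no directed cycle inside `S`. -/
def AcyclicOn {C : Type} (r : C → C → Prop) (S : Set C) : Prop :=
  ∀ x, ¬ Relation.TransGen (fun a b => a ∈ S ∧ b ∈ S ∧ r a b) x x

/-- The dichromatic number of the digraph given by the relation `r`: the minimum number of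
parts in a partition of the vertices into sets each inducing an acyclic subdigraph. -/
noncomputable def dichromaticNumber {C : Type} (r : C → C → Prop) : ℕ :=
  sInf {k | ∃ c : C → Fin k, ∀ m : Fin k, AcyclicOn r {x | c x = m}}

/-- `r` is a tournament: irreflexive with exactly one arc between distinct vertices. -/
def IsTournament {C : Type} (r : C → C → Prop) : Prop :=
  (∀ i, ¬ r i i) ∧ ∀ i j : C, i ≠ j → (r i j ↔ ¬ r j i)

/-- The voter's partial order partitions the candidates into at most `α` disjoint chains:
two distinct candidates are comparable iff they lie in the same chain. -/
def ChainPartition {C : Type} (v : Voter C) (α : ℕ) : Prop :=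
  ∃ c : C → ℕ, (∀ i, c i < α) ∧
    ∀ i j : C, i ≠ j → ((v.rel i j ∨ v.rel j i) ↔ c i = c j)

/-- Auxiliary lemma. -/
lemma tripart {V P : Type*} [DecidableEq V] (part : V → P)
    (A B C : Finset V) (S : Finset V) (m : ℕ)
    (hAS : A ⊆ S) (hBS : B ⊆ S) (hCS : C ⊆ S)
    (hA : m ≤ A.card) (hB : m ≤ B.card) (hC : m ≤ C.card)
    (hAB : ∀ a ∈ A, ∀ b ∈ B, part a ≠ part b)
    (hAC : ∀ a ∈ A, ∀ c ∈ C, part a ≠ part c)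
    (hBC : ∀ b ∈ B, ∀ c ∈ C, part b ≠ part c) :
    ∃ T : Finset (Finset V), m ^ 2 ≤ T.card ∧
      (∀ t ∈ T, t ⊆ S ∧ t.card = 3 ∧ ∀ u ∈ t, ∀ v ∈ t, u ≠ v → part u ≠ part v) ∧
      ∀ t₁ ∈ T, ∀ t₂ ∈ T, t₁ ≠ t₂ → (t₁ ∩ t₂).card ≤ 1 := by

  rcases Nat.eq_zero_or_pos m with hm | hm
  · exact ⟨∅, by simp [hm], by simp, by simp⟩
  haveI : NeZero m := ⟨hm.ne'⟩
  obtain ⟨A', hA'sub, hA'card⟩ := Finset.exists_subset_card_eq hA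
  obtain ⟨B', hB'sub, hB'card⟩ := Finset.exists_subset_card_eq hB
  obtain ⟨C', hC'sub, hC'card⟩ := Finset.exists_subset_card_eq hC
  set eA := (Finset.equivFinOfCardEq hA'card).symm with heA
  set eB := (Finset.equivFinOfCardEq hB'card).symm with heB
  set eC := (Finset.equivFinOfCardEq hC'card).symm with heC
  set fA : Fin m → V := fun i => (eA i : V) with hfAdef
  set fB : Fin m → V := fun i => (eB i : V) with hfBdef
  set fC : Fin m → V := fun i => (eC i : V) with hfCdef
  have hfA : ∀ i, fA i ∈ A := fun i => hA'sub (eA i).2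
  have hfB : ∀ i, fB i ∈ B := fun i => hB'sub (eB i).2
  have hfC : ∀ i, fC i ∈ C := fun i => hC'sub (eC i).2
  have hfAinj : Function.Injective fA := fun i j h =>
    eA.injective (Subtype.ext h)
  have hfBinj : Function.Injective fB := fun i j h =>
    eB.injective (Subtype.ext h)
  have hfCinj : Function.Injective fC := fun i j h =>
    eC.injective (Subtype.ext h)
  have hABne : ∀ i j, fA i ≠ fB j := fun i j h =>
    hAB _ (hfA i) _ (hfB j) (congrArg part h)
  have hACne : ∀ i j, fA i ≠ fC j := fun i j h =>
    hAC _ (hfA i) _ (hfC j) (congrArg part h)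
  have hBCne : ∀ i j, fB i ≠ fC j := fun i j h =>
    hBC _ (hfB i) _ (hfC j) (congrArg part h)
  set tri : Fin m → Fin m → Finset V := fun i j => {fA i, fB j, fC (i + j)} with htri
  -- membership characterizations
  have hmemA : ∀ i i' j', fA i ∈ tri i' j' → i = i' := by
    intro i i' j' h
    simp only [htri, Finset.mem_insert, Finset.mem_singleton] at h
    rcases h with h | h | h
    · exact hfAinj h
    · exact absurd h (hABne i j')
    · exact absurd h (hACne i (i' + j'))
  have hmemB : ∀ j i' j', fB j ∈ tri i' j' → j = j' := by
    intro j i' j' h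
    simp only [htri, Finset.mem_insert, Finset.mem_singleton] at h
    rcases h with h | h | h
    · exact absurd h.symm (hABne i' j)
    · exact hfBinj h
    · exact absurd h (hBCne j (i' + j'))
  have hmemC : ∀ l i' j', fC l ∈ tri i' j' → l = i' + j' := by
    intro l i' j' h
    simp only [htri, Finset.mem_insert, Finset.mem_singleton] at h
    rcases h with h | h | h
    · exact absurd h.symm (hACne i' l)
    · exact absurd h.symm (hBCne j' l)
    · exact hfCinj h
  have htriinj : Function.Injective (fun p : Fin m × Fin m => tri p.1 p.2) := by
    intro ⟨i, j⟩ ⟨i', j'⟩ h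
    simp only at h
    have h1 : fA i ∈ tri i' j' := h ▸ (by simp [htri])
    have h2 : fB j ∈ tri i' j' := h ▸ (by simp [htri])
    exact Prod.ext (hmemA i i' j' h1) (hmemB j i' j' h2)
  refine ⟨Finset.image (fun p : Fin m × Fin m => tri p.1 p.2) Finset.univ, ?_, ?_, ?_⟩
  · rw [Finset.card_image_of_injective _ htriinj]
    simp [sq]
  · intro t ht
    simp only [Finset.mem_image, Finset.mem_univ, true_and] at ht
    obtain ⟨⟨i, j⟩, rfl⟩ := ht
    refine ⟨?_, ?_, ?_⟩
    · intro x hx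
      simp only [htri, Finset.mem_insert, Finset.mem_singleton] at hx
      rcases hx with rfl | rfl | rfl
      · exact hAS (hfA i)
      · exact hBS (hfB j)
      · exact hCS (hfC (i + j))
    · rw [htri]
      rw [Finset.card_insert_of_notMem (by
          simp only [Finset.mem_insert, Finset.mem_singleton]
          push_neg
          exact ⟨hABne i j, hACne i (i + j)⟩),
        Finset.card_insert_of_notMem (by
          simp only [Finset.mem_singleton]
          exact hBCne j (i + j)),
        Finset.card_singleton]
    · intro u hu v hv huv
      simp only [htri, Finset.mem_insert, Finset.mem_singleton] at hu hv
      rcases hu with rfl | rfl | rfl <;> rcases hv with rfl | rfl | rfl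
      · exact absurd rfl huv
      · exact hAB _ (hfA i) _ (hfB j)
      · exact hAC _ (hfA i) _ (hfC (i + j))
      · exact fun h => hAB _ (hfA i) _ (hfB j) h.symm
      · exact absurd rfl huv
      · exact hBC _ (hfB j) _ (hfC (i + j))
      · exact fun h => hAC _ (hfA i) _ (hfC (i + j)) h.symm
      · exact fun h => hBC _ (hfB j) _ (hfC (i + j)) h.symm
      · exact absurd rfl huv
  · intro t₁ ht₁ t₂ ht₂ hne
    simp only [Finset.mem_image, Finset.mem_univ, true_and] at ht₁ ht₂
    obtain ⟨⟨i, j⟩, rfl⟩ := ht₁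
    obtain ⟨⟨i', j'⟩, rfl⟩ := ht₂
    have hpne : (i, j) ≠ (i', j') := fun h => hne (by rw [h])
    rw [Finset.card_le_one]
    intro u hu v hv
    simp only [Finset.mem_inter] at hu hv
    have key : ∀ w, w ∈ tri i j → w ∈ tri i' j' →
        (w = fA i ∧ i = i') ∨ (w = fB j ∧ j = j') ∨ (w = fC (i + j) ∧ i + j = i' + j') := by
      intro w hw hw'
      simp only [htri, Finset.mem_insert, Finset.mem_singleton] at hw
      rcases hw with rfl | rfl | rfl
      · exact Or.inl ⟨rfl, hmemA i i' j' hw'⟩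
      · exact Or.inr (Or.inl ⟨rfl, hmemB j i' j' hw'⟩)
      · exact Or.inr (Or.inr ⟨rfl, hmemC (i + j) i' j' hw'⟩)
    have hii' : ¬ (i = i' ∧ j = j') := fun ⟨h1, h2⟩ => hpne (by rw [h1, h2])
    have e3 : i = i' → i + j = i' + j' → j = j' := by
      intro h1 h2; rwa [h1, add_right_inj] at h2
    have e4 : j = j' → i + j = i' + j' → i = i' := by
      intro h1 h2; rwa [h1, add_left_inj] at h2
    rcases key u hu.1 hu.2 with ⟨rfl, hu'⟩ | ⟨rfl, hu'⟩ | ⟨rfl, hu'⟩ <;>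
      rcases key v hv.1 hv.2 with ⟨rfl, hv'⟩ | ⟨rfl, hv'⟩ | ⟨rfl, hv'⟩
    · rfl
    · exact absurd ⟨hu', hv'⟩ hii'
    · exact absurd ⟨hu', e3 hu' hv'⟩ hii'
    · exact absurd ⟨hv', hu'⟩ hii'
    · rfl
    · exact absurd ⟨e4 hu' hv', hu'⟩ hii'
    · exact absurd ⟨hv', e3 hv' hu'⟩ hii'
    · exact absurd ⟨e4 hv' hu', hv'⟩ hii'
    · rfl

/-- in the complete `k`-partite graph with parts of size `n/k` (where
`k ∣ n`), every set `S` of `5n/k` vertices contains at least `(n/k)²` pairwise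
edge-disjoint triangles. -/
theorem kpartite_edge_disjoint_triangles (k n : ℕ) (hk : 0 < k) (hdvd : k ∣ n)
    (S : Finset (Fin k × Fin (n / k))) (hS : S.card = 5 * (n / k)) :
    ∃ T : Finset (Finset (Fin k × Fin (n / k))),
      (n / k) ^ 2 ≤ T.card ∧
      (∀ t ∈ T, t ⊆ S ∧ t.card = 3 ∧ ∀ u ∈ t, ∀ v ∈ t, u ≠ v → u.1 ≠ v.1) ∧
      ∀ t₁ ∈ T, ∀ t₂ ∈ T, t₁ ≠ t₂ → (t₁ ∩ t₂).card ≤ 1 := by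
  classical
  revert S hS
  set m := n / k with hm
  intro S hS
  rcases Nat.eq_zero_or_pos m with hm0 | hm0
  · exact ⟨∅, by simp [hm0], by simp, by simp⟩
  set f : ℕ → ℕ := fun i => (S.filter (fun v => (v.1 : ℕ) = i)).card with hf
  set F : ℕ → ℕ := fun j => ∑ i ∈ Finset.range j, f i with hF
  have hfle : ∀ i, f i ≤ m := by
    intro i
    have : (S.filter (fun v => (v.1 : ℕ) = i)).card ≤ (Finset.univ : Finset (Fin m)).card := by
      apply Finset.card_le_card_of_injOn (fun v => v.2)
      · intro v _; exact Finset.mem_univ _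
      · intro v hv w hw hvw
        simp only [Finset.mem_coe, Finset.mem_filter] at hv hw
        exact Prod.ext (Fin.val_injective (hv.2.trans hw.2.symm)) hvw
    simpa using this
  have hFk : F k = 5 * m := by
    show ∑ i ∈ Finset.range k, f i = 5 * m
    rw [← Finset.card_eq_sum_card_fiberwise (f := fun v : Fin k × Fin m => (v.1 : ℕ))
      (t := Finset.range k) (fun v _ => Finset.mem_range.2 v.1.isLt)]
    exact hS
  have hFmono : ∀ {a b : ℕ}, a ≤ b → F a ≤ F b := by
    intro a b hab
    exact Finset.sum_le_sum_of_subset (Finset.range_subset_range.2 hab)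
  -- q1
  have hex1 : ∃ j, m ≤ F j := ⟨k, by omega⟩
  have hex2 : ∃ j, 3 * m ≤ F j := ⟨k, by omega⟩
  set q1 := Nat.find hex1 with hq1
  set q2 := Nat.find hex2 with hq2
  have hq1spec : m ≤ F q1 := Nat.find_spec hex1
  have hq2spec : 3 * m ≤ F q2 := Nat.find_spec hex2
  have hq1k : q1 ≤ k := Nat.find_le (by omega)
  have hq2k : q2 ≤ k := Nat.find_le (by omega)
  have hq12 : q1 ≤ q2 := Nat.find_le (by omega)
  have hF0 : F 0 = 0 := by simp [hF]
  have hq1pos : 0 < q1 := by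
    rcases Nat.eq_zero_or_pos q1 with h | h
    · rw [h] at hq1spec; omega
    · exact h
  have hq2pos : 0 < q2 := by
    rcases Nat.eq_zero_or_pos q2 with h | h
    · rw [h] at hq2spec; omega
    · exact h
  have hFsucc : ∀ j, F (j + 1) = F j + f j := fun j => Finset.sum_range_succ f j
  have hq1ub : F q1 < 2 * m := by
    have h1 : ¬ m ≤ F (q1 - 1) := Nat.find_min hex1 (by omega)
    have h2 : F q1 = F (q1 - 1) + f (q1 - 1) := by
      have h := hFsucc (q1 - 1)
      have e : q1 - 1 + 1 = q1 := by omega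
      rwa [e] at h
    have := hfle (q1 - 1)
    omega
  have hq2ub : F q2 < 4 * m := by
    have h1 : ¬ 3 * m ≤ F (q2 - 1) := Nat.find_min hex2 (by omega)
    have h2 : F q2 = F (q2 - 1) + f (q2 - 1) := by
      have h := hFsucc (q2 - 1)
      have e : q2 - 1 + 1 = q2 := by omega
      rwa [e] at h
    have := hfle (q2 - 1)
    omega
  set A := S.filter (fun v => (v.1 : ℕ) < q1) with hA
  set B := S.filter (fun v => q1 ≤ (v.1 : ℕ) ∧ (v.1 : ℕ) < q2) with hB
  set C := S.filter (fun v => q2 ≤ (v.1 : ℕ)) with hC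
  have hcardA : A.card = F q1 := by
    rw [Finset.card_eq_sum_card_fiberwise (f := fun v : Fin k × Fin m => (v.1 : ℕ))
      (t := Finset.range q1) (fun v hv => by
        simp only [hA, Finset.mem_filter] at hv
        exact Finset.mem_range.2 (Finset.mem_filter.1 hv).2)]
    apply Finset.sum_congr rfl
    intro i hi
    rw [Finset.mem_range] at hi
    congr 1
    rw [hA, Finset.filter_filter]
    apply Finset.filter_congr
    intro v _
    omega
  have hcardB : F q1 + B.card = F q2 := by
    have : B.card = ∑ i ∈ Finset.Ico q1 q2, f i := by
      rw [Finset.card_eq_sum_card_fiberwise (f := fun v : Fin k × Fin m => (v.1 : ℕ))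
        (t := Finset.Ico q1 q2) (fun v hv => by
          simp only [hB, Finset.mem_filter] at hv
          exact Finset.mem_Ico.2 (Finset.mem_filter.1 hv).2)]
      apply Finset.sum_congr rfl
      intro i hi
      rw [Finset.mem_Ico] at hi
      congr 1
      rw [hB, Finset.filter_filter]
      apply Finset.filter_congr
      intro v _
      omega
    rw [this, hF]
    exact Finset.sum_range_add_sum_Ico f hq12
  have hcardC : F q2 + C.card = 5 * m := by
    have : C.card = ∑ i ∈ Finset.Ico q2 k, f i := by
      rw [Finset.card_eq_sum_card_fiberwise (f := fun v : Fin k × Fin m => (v.1 : ℕ))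
        (t := Finset.Ico q2 k) (fun v hv => by
          simp only [hC, Finset.mem_filter] at hv
          exact Finset.mem_Ico.2 ⟨(Finset.mem_filter.1 hv).2, v.1.isLt⟩)]
      apply Finset.sum_congr rfl
      intro i hi
      rw [Finset.mem_Ico] at hi
      congr 1
      rw [hC, Finset.filter_filter]
      apply Finset.filter_congr
      intro v _
      omega
    rw [this, hF, ← hFk]
    exact Finset.sum_range_add_sum_Ico f hq2k
  have hmA : m ≤ A.card := by omega
  have hmB : m ≤ B.card := by omega
  have hmC : m ≤ C.card := by omega
  apply tripart (fun v : Fin k × Fin m => v.1) A B C S m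
    (Finset.filter_subset _ _) (Finset.filter_subset _ _) (Finset.filter_subset _ _)
    hmA hmB hmC
  · intro a ha b hb
    simp only [hA, hB, Finset.mem_filter] at ha hb
    intro h
    have : (a.1 : ℕ) = (b.1 : ℕ) := by rw [h]
    omega
  · intro a ha c hc
    simp only [hA, hC, Finset.mem_filter] at ha hc
    intro h
    have : (a.1 : ℕ) = (c.1 : ℕ) := by rw [h]
    omega
  · intro b hb c hc
    simp only [hB, hC, Finset.mem_filter] at hb hc
    intro h
    have : (b.1 : ℕ) = (c.1 : ℕ) := by rw [h]
    omega
end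

section
/- Let T be a tournament and let T̂ be the tournament consisting of two disjoint copies T₁, T₂ of T together with one extra vertex z, where in addition to the arcs inside each copy, every vertex of T₁ has an arc to every vertex of T₂, every vertex of T₂ has an arc to z, and z has an arc to every vertex of T₁. Then χ⃗(T̂) = χ⃗(T) + 1; equivalently, for every k ≥ 2, χ⃗(T) = k−1 if and only if χ⃗(T̂) = k. -/
open scoped Classical

/-- The tournament `T̂` built from two copies of `T` and one extra vertex `z`, with all
arcs from the first copy to the second, from the second copy to `z`, and from `z` to the
first copy. -/
def hatTournament {C : Type} (r : C → C → Prop) :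
    (C ⊕ C ⊕ Unit) → (C ⊕ C ⊕ Unit) → Prop
  | Sum.inl x, Sum.inl y => r x y
  | Sum.inl _, Sum.inr (Sum.inl _) => True
  | Sum.inr (Sum.inl x), Sum.inr (Sum.inl y) => r x y
  | Sum.inr (Sum.inl _), Sum.inr (Sum.inr _) => True
  | Sum.inr (Sum.inr _), Sum.inl _ => True
  | _, _ => False

lemma transGen_not_of_empty {α : Type*} {s : α → α → Prop} (h : ∀ a b, ¬ s a b) :
    ∀ x y : α, ¬ Relation.TransGen s x y := by
  intro x y hxy
  induction hxy with
  | single h' => exact h _ _ h'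
  | tail _ h' _ => exact h _ _ h'

/-- The color map for the hat tournament. -/
def hatColor {C : Type} {n : ℕ} (c₀ : C → Fin n) : (C ⊕ C ⊕ Unit) → Fin (n + 1)
  | Sum.inl a => (c₀ a).castSucc
  | Sum.inr (Sum.inl a) => (c₀ a).castSucc
  | Sum.inr (Sum.inr _) => Fin.last n

/-- Auxiliary relation describing reachability within a color class of the hat tournament. -/
def hatQ {C : Type} (s₁ : C → C → Prop) : (C ⊕ C ⊕ Unit) → (C ⊕ C ⊕ Unit) → Prop
  | Sum.inl a, Sum.inl b => Relation.TransGen s₁ a b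
  | Sum.inl _, Sum.inr (Sum.inl _) => True
  | Sum.inr (Sum.inl a), Sum.inr (Sum.inl b) => Relation.TransGen s₁ a b
  | _, _ => False

lemma hatQ_trans {C : Type} (s₁ : C → C → Prop) :
    ∀ a b c, hatQ s₁ a b → hatQ s₁ b c → hatQ s₁ a c := by
  rintro (a | a | a) (b | b | b) (c | c | c) h1 h2 <;>
    first | exact h1.elim | exact h2.elim | trivial | exact h1.trans h2

lemma hat_acyclic_class {C : Type} (r : C → C → Prop) (n : ℕ) (c₀ : C → Fin n)
    (hc₀ : ∀ t : Fin n, AcyclicOn r {x | c₀ x = t}) :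
    ∀ m : Fin (n + 1), AcyclicOn (hatTournament r) {x | hatColor c₀ x = m} := by
  intro m
  by_cases hm : (m : ℕ) < n
  · set t : Fin n := ⟨(m : ℕ), hm⟩ with ht
    set s₁ : C → C → Prop :=
      fun a b => a ∈ {x | c₀ x = t} ∧ b ∈ {x | c₀ x = t} ∧ r a b with hs₁
    have hmem : ∀ a : C, hatColor c₀ (Sum.inl a) = m → c₀ a = t := by
      intro a h
      have h' := congrArg Fin.val h
      simp only [hatColor, Fin.coe_castSucc] at h'
      exact Fin.ext h'
    have hmem' : ∀ a : C, hatColor c₀ (Sum.inr (Sum.inl a)) = m → c₀ a = t := by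
      intro a h
      have h' := congrArg Fin.val h
      simp only [hatColor, Fin.coe_castSucc] at h'
      exact Fin.ext h'
    have hz : ∀ u : Unit, hatColor c₀ (Sum.inr (Sum.inr u)) ≠ m := by
      intro u h
      have h' := congrArg Fin.val h
      simp only [hatColor, Fin.val_last] at h'
      omega
    have hstep : ∀ a b : C ⊕ C ⊕ Unit,
        a ∈ {x | hatColor c₀ x = m} → b ∈ {x | hatColor c₀ x = m} →
        hatTournament r a b → hatQ s₁ a b := by
      rintro (a | a | a) (b | b | b) ha hb hab
      · exact Relation.TransGen.single ⟨hmem a ha, hmem b hb, hab⟩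
      · trivial
      · exact absurd hb (hz b)
      · exact hab.elim
      · exact Relation.TransGen.single ⟨hmem' a ha, hmem' b hb, hab⟩
      · exact absurd hb (hz b)
      · exact absurd ha (hz a)
      · exact absurd ha (hz a)
      · exact absurd ha (hz a)
    intro x hx
    have hQgen : ∀ y, Relation.TransGen
        (fun a b => a ∈ {x | hatColor c₀ x = m} ∧ b ∈ {x | hatColor c₀ x = m} ∧
          hatTournament r a b) x y → hatQ s₁ x y := by
      intro y hy
      induction hy with
      | single h => exact hstep _ _ h.1 h.2.1 h.2.2
      | tail _ h ih => exact hatQ_trans s₁ _ _ _ ih (hstep _ _ h.1 h.2.1 h.2.2)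
    have hQ : hatQ s₁ x x := hQgen x hx
    rcases x with a | a | a
    · exact hc₀ t a hQ
    · exact hc₀ t a hQ
    · exact hQ
  · -- m = last n : only z is in this class
    have hne1 : ∀ a : C, hatColor c₀ (Sum.inl a) ≠ m := by
      intro a h
      have h' := congrArg Fin.val h
      simp only [hatColor, Fin.coe_castSucc] at h'
      have := (c₀ a).isLt
      have := m.isLt
      omega
    have hne2 : ∀ a : C, hatColor c₀ (Sum.inr (Sum.inl a)) ≠ m := by
      intro a h
      have h' := congrArg Fin.val h
      simp only [hatColor, Fin.coe_castSucc] at h'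
      have := (c₀ a).isLt
      have := m.isLt
      omega
    intro x
    apply transGen_not_of_empty
    rintro (a | a | a) (b | b | b) ⟨ha, hb, hab⟩ <;>
      first
        | exact hne1 _ ha | exact hne2 _ ha
        | exact hne1 _ hb | exact hne2 _ hb
        | exact hab

lemma lower_aux {C : Type} (r : C → C → Prop) (k : ℕ)
    (c : (C ⊕ C ⊕ Unit) → Fin k)
    (hc : ∀ m : Fin k, AcyclicOn (hatTournament r) {x | c x = m})
    (ι : C → C ⊕ C ⊕ Unit)
    (hι : ∀ a b : C, r a b → hatTournament r (ι a) (ι b))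
    (m : Fin k) (hm : ∀ x : C, c (ι x) ≠ m) :
    ∃ c' : C → Fin (k - 1), ∀ t : Fin (k - 1), AcyclicOn r {x | c' x = t} := by
  have hk : 0 < k := m.pos
  set f : C → ℕ := fun x =>
    if (c (ι x) : ℕ) < (m : ℕ) then (c (ι x) : ℕ) else (c (ι x) : ℕ) - 1 with hf
  have hne : ∀ x : C, (c (ι x) : ℕ) ≠ (m : ℕ) := by
    intro x h
    exact hm x (Fin.ext h)
  have hfb : ∀ x : C, f x < k - 1 := by
    intro x
    have h1 := (c (ι x)).isLt
    have h2 := hne x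
    have h3 := m.isLt
    simp only [hf]
    split_ifs with h <;> omega
  have key : ∀ a b : C, f a = f b → c (ι a) = c (ι b) := by
    intro a b h
    have h1 := (c (ι a)).isLt
    have h2 := hne a
    have h3 := hne b
    apply Fin.ext
    simp only [hf] at h
    split_ifs at h <;> omega
  refine ⟨fun x => ⟨f x, hfb x⟩, ?_⟩
  intro t x hx
  have hxS : f x = (t : ℕ) := by
    cases hx with
    | single h => exact congrArg Fin.val h.1
    | tail _ h => exact congrArg Fin.val h.2.1
  refine hc (c (ι x)) (ι x) (Relation.TransGen.lift ι ?_ x x hx)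
  rintro a b ⟨ha, hb, hab⟩
  have ha' : f a = (t : ℕ) := congrArg Fin.val ha
  have hb' : f b = (t : ℕ) := congrArg Fin.val hb
  exact ⟨key a x (ha'.trans hxS.symm), key b x (hb'.trans hxS.symm), hι a b hab⟩

/-- `χ⃗(T̂) = χ⃗(T) + 1`; equivalently, for every `k ≥ 2`,
`χ⃗(T) = k - 1` iff `χ⃗(T̂) = k`. -/
theorem dichromaticNumber_hatTournament {C : Type} [Fintype C]
    (r : C → C → Prop) (hT : IsTournament r) :
    dichromaticNumber (hatTournament r) = dichromaticNumber r + 1 ∧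
      ∀ k : ℕ, 2 ≤ k →
        (dichromaticNumber r = k - 1 ↔ dichromaticNumber (hatTournament r) = k) := by
  set Sr : Set ℕ := {k | ∃ c : C → Fin k, ∀ m : Fin k, AcyclicOn r {x | c x = m}} with hSr
  set Sh : Set ℕ := {k | ∃ c : (C ⊕ C ⊕ Unit) → Fin k,
    ∀ m : Fin k, AcyclicOn (hatTournament r) {x | c x = m}} with hSh
  have hSr_ne : Sr.Nonempty := by
    refine ⟨Fintype.card C, ⇑(Fintype.equivFin C), ?_⟩
    intro m x
    apply transGen_not_of_empty
    rintro a b ⟨ha, hb, hab⟩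
    have hab' : a = b := (Fintype.equivFin C).injective (ha.trans hb.symm)
    subst hab'
    exact hT.1 a hab
  set n := dichromaticNumber r with hndef
  have hn : n ∈ Sr := Nat.sInf_mem hSr_ne
  obtain ⟨c₀, hc₀⟩ := hn
  have hhat : n + 1 ∈ Sh := ⟨hatColor c₀, hat_acyclic_class r n c₀ hc₀⟩
  set k := dichromaticNumber (hatTournament r) with hkdef
  have hub : k ≤ n + 1 := Nat.sInf_le hhat
  have hk : k ∈ Sh := Nat.sInf_mem ⟨n + 1, hhat⟩
  obtain ⟨c, hc⟩ := hk
  set m : Fin k := c (Sum.inr (Sum.inr ())) with hmdef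
  have hk1 : 0 < k := m.pos
  have hlow : ∃ c' : C → Fin (k - 1), ∀ t : Fin (k - 1), AcyclicOn r {x | c' x = t} := by
    by_cases hcase : ∀ x : C, c (Sum.inr (Sum.inl x)) ≠ m
    · exact lower_aux r k c hc (fun x => Sum.inr (Sum.inl x)) (fun a b hab => hab) m hcase
    · push_neg at hcase
      obtain ⟨x₂, hx₂⟩ := hcase
      refine lower_aux r k c hc (fun x => Sum.inl x) (fun a b hab => hab) m ?_
      intro x₁ hx₁
      refine hc m (Sum.inr (Sum.inr ()))
        (Relation.TransGen.tail (c := Sum.inr (Sum.inr ()))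
          (Relation.TransGen.tail (c := Sum.inr (Sum.inl x₂))
            (Relation.TransGen.single (b := Sum.inl x₁) ⟨rfl, hx₁, trivial⟩)
            ⟨hx₁, hx₂, trivial⟩)
          ⟨hx₂, rfl, trivial⟩)
  obtain ⟨c', hc'⟩ := hlow
  have hlb : n ≤ k - 1 := Nat.sInf_le ⟨c', hc'⟩
  have hmain : k = n + 1 := by omega
  exact ⟨hmain, fun k' hk' => by omega⟩
end
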